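/- Let H be a real Hilbert space, let α : H → H* be a continuously differentiable (C¹) map into the topological dual of H, let T > 0, and let γ, η : ℝ → H be twice continuously differentiable curves with η(0) = 0 and η(T) = 0. Define the action A : ℝ → ℝ by A(s) = ∫₀ᵀ ( ½‖γ'(t) + s·η'(t)‖² − α(γ(t) + s·η(t))(γ'(t) + s·η'(t)) ) dt. Then A is differentiable at s = 0 with A'(0) = ∫₀ᵀ ( −⟨γ''(t), η(t)⟩ + (Dα(γ(t))[γ'(t)])(η(t)) − (Dα(γ(t))[η(t)])(γ'(t)) ) dt, where Dα(x)[u] ∈ H* denotes the Fréchet derivative of α at x applied to u. -/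

import Mathlib

/-!
Differentiate under the integral sign (the `s`-derivative of the integrand is jointly continuous,
hence bounded on a compact neighbourhood), then integrate the `η'`-terms by parts: the difference
between the two integrands is the time derivative of `⟪γ', η⟫ - α_γ(η)`, which vanishes at `0`
and `T`.
-/

open intervalIntegral MeasureTheory Metric Set
open scoped RealInnerProductSpace Interval

theorem hasDerivAt_intervalIntegral_of_continuous_partial {E : Type*} [NormedAddCommGroup E]
    [NormedSpace ℝ E] {F F' : ℝ → ℝ → E} {a b s₀ : ℝ} (hF : ∀ s, Continuous (F s))
    (hF' : Continuous (Function.uncurry F')) (hpartial : ∀ s t, HasDerivAt (F · t) (F' s t) s) :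
    HasDerivAt (fun s => ∫ t in a..b, F s t) (∫ t in a..b, F' s₀ t) s₀ := by
  obtain ⟨C, hC⟩ := (isCompact_closedBall s₀ 1 |>.prod isCompact_uIcc).exists_bound_of_continuousOn
    hF'.continuousOn
  have h_bound : ∀ t ∈ Ι a b, ∀ s ∈ ball s₀ 1, ‖F' s t‖ ≤ C := fun t ht s hs =>
    hC (s, t) ⟨ball_subset_closedBall hs, uIoc_subset_uIcc ht⟩
  exact (hasDerivAt_integral_of_dominated_loc_of_deriv_le (ball_mem_nhds s₀ one_pos)
    (.of_forall fun s => (hF s).aestronglyMeasurable) ((hF s₀).intervalIntegrable a b)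
    (hF'.comp (Continuous.prodMk_right s₀)).aestronglyMeasurable (.of_forall h_bound)
    intervalIntegrable_const (.of_forall fun t _ s _ => hpartial s t)).2

theorem intervalIntegral.integral_eq_of_hasDerivAt_sub {E : Type*} [NormedAddCommGroup E]
    [NormedSpace ℝ E] [CompleteSpace E] {f g G : ℝ → E} {a b : ℝ}
    (hG : ∀ t ∈ [[a, b]], HasDerivAt G (f t - g t) t) (hf : IntervalIntegrable f volume a b)
    (hg : IntervalIntegrable g volume a b) (hGab : G a = G b) :
    ∫ t in a..b, f t = ∫ t in a..b, g t := by
  rw [← sub_eq_zero, ← integral_sub hf hg, integral_eq_sub_of_hasDerivAt hG (hf.sub hg), hGab,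
    sub_self]

section

variable {H : Type*} [NormedAddCommGroup H] [InnerProductSpace ℝ H]

theorem hasDerivAt_add_smul (x u : H) (s : ℝ) : HasDerivAt (fun s : ℝ => x + s • u) u s := by
  simpa using ((hasDerivAt_id s).smul_const u).const_add x

noncomputable def magneticLagrangian (α : H → H →L[ℝ] ℝ) (x v : H) : ℝ :=
  1 / 2 * ‖v‖ ^ 2 - α x v

theorem HasDerivAt.magneticLagrangian {α : H → H →L[ℝ] ℝ} {α' : H →L[ℝ] H →L[ℝ] ℝ}
    {x v : ℝ → H} {x' v' : H} {s : ℝ} (hα : HasFDerivAt α α' (x s)) (hx : HasDerivAt x x' s)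
    (hv : HasDerivAt v v' s) :
    HasDerivAt (fun s => magneticLagrangian α (x s) (v s))
      (⟪v s, v'⟫ - (α' x' (v s) + α (x s) v')) s :=
  ((hv.norm_sq.const_mul (1 / 2)).sub ((hα.comp_hasDerivAt s hx).clm_apply hv)).congr_deriv
    (by rw [Function.comp_apply]; ring)

end

theorem stmt_15_general {H : Type*} [NormedAddCommGroup H] [InnerProductSpace ℝ H]
    (α : H → (H →L[ℝ] ℝ)) (hα : ContDiff ℝ 1 α)
    (T : ℝ)
    (γ η : ℝ → H) (hγ : ContDiff ℝ 2 γ) (hη : ContDiff ℝ 2 η)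
    (hη0 : η 0 = 0) (hηT : η T = 0)
    (A : ℝ → ℝ)
    (hA : ∀ s : ℝ, A s = ∫ t in (0:ℝ)..T,
      ((1 / 2) * ‖deriv γ t + s • deriv η t‖ ^ 2 -
        α (γ t + s • η t) (deriv γ t + s • deriv η t))) :
    HasDerivAt A
      (∫ t in (0:ℝ)..T,
        (-(inner ℝ (deriv (deriv γ) t) (η t) : ℝ)
          + (fderiv ℝ α (γ t) (deriv γ t)) (η t)
          - (fderiv ℝ α (γ t) (η t)) (deriv γ t))) 0 := by
  have hγ' : ContDiff ℝ 1 (deriv γ) := hγ.deriv'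
  have hγc := hγ.continuous
  have hγ'c := hγ'.continuous
  have hγ''c := hγ'.continuous_deriv_one
  have hηc := hη.continuous
  have hη'c := hη.continuous_deriv one_le_two
  have hαc := hα.continuous
  have hα'c := hα.continuous_fderiv one_ne_zero
  have hαd : Differentiable ℝ α := hα.differentiable one_ne_zero
  set L' : ℝ → ℝ → ℝ := fun s t => ⟪deriv γ t + s • deriv η t, deriv η t⟫ -
    (fderiv ℝ α (γ t + s • η t) (η t) (deriv γ t + s • deriv η t) +
      α (γ t + s • η t) (deriv η t))
  have hA' : HasDerivAt A (∫ t in 0..T, L' 0 t) 0 := by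
    rw [funext hA]
    exact hasDerivAt_intervalIntegral_of_continuous_partial (by fun_prop) (by fun_prop)
      fun s t => HasDerivAt.magneticLagrangian (hαd _).hasFDerivAt (hasDerivAt_add_smul _ _ s)
        (hasDerivAt_add_smul _ _ s)
  have hγd t : HasDerivAt γ (deriv γ t) t := (hγ.differentiable two_ne_zero t).hasDerivAt
  have hγ'd t : HasDerivAt (deriv γ) (deriv (deriv γ) t) t :=
    (hγ'.differentiable one_ne_zero t).hasDerivAt
  have hηd t : HasDerivAt η (deriv η t) t := (hη.differentiable two_ne_zero t).hasDerivAt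
  have hboundary t : HasDerivAt (fun t => ⟪deriv γ t, η t⟫ - α (γ t) (η t))
      (L' 0 t - (-⟪deriv (deriv γ) t, η t⟫ + fderiv ℝ α (γ t) (deriv γ t) (η t)
        - fderiv ℝ α (γ t) (η t) (deriv γ t))) t :=
    ((hγ'd t).inner ℝ (hηd t) |>.sub
      (((hαd _).hasFDerivAt.comp_hasDerivAt t (hγd t)).clm_apply (hηd t))).congr_deriv
      (by simp only [L', Function.comp_apply, zero_smul, add_zero]; ring)
  exact hA'.congr_deriv (integral_eq_of_hasDerivAt_sub (fun t _ => hboundary t)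
    ((by fun_prop : Continuous (L' 0)).intervalIntegrable _ _)
    (Continuous.intervalIntegrable (by fun_prop) _ _) (by simp [hη0, hηT]))

/-- first variation of the magnetic action in a flat chart:
for a C¹ one-form `α : H → H*`, C² curves `γ, η` with `η(0) = η(T) = 0`, the action
`A(s) = ∫₀ᵀ (½‖γ' + sη'‖² − α(γ + sη)(γ' + sη'))` is differentiable at `s = 0` with
`A'(0) = ∫₀ᵀ (−⟪γ'', η⟫ + (Dα(γ)[γ'])(η) − (Dα(γ)[η])(γ'))`. -/
theorem stmt_15 {H : Type*} [NormedAddCommGroup H] [InnerProductSpace ℝ H] [CompleteSpace H]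
    (α : H → (H →L[ℝ] ℝ)) (hα : ContDiff ℝ 1 α)
    (T : ℝ) (hT : 0 < T)
    (γ η : ℝ → H) (hγ : ContDiff ℝ 2 γ) (hη : ContDiff ℝ 2 η)
    (hη0 : η 0 = 0) (hηT : η T = 0)
    (A : ℝ → ℝ)
    (hA : ∀ s : ℝ, A s = ∫ t in (0:ℝ)..T,
      ((1 / 2) * ‖deriv γ t + s • deriv η t‖ ^ 2 -
        α (γ t + s • η t) (deriv γ t + s • deriv η t))) :
    HasDerivAt A
      (∫ t in (0:ℝ)..T,
        (-(inner ℝ (deriv (deriv γ) t) (η t) : ℝ)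
          + (fderiv ℝ α (γ t) (deriv γ t)) (η t)
          - (fderiv ℝ α (γ t) (η t)) (deriv γ t))) 0 :=
  stmt_15_general α hα T γ η hγ hη hη0 hηT A hA
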